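/- arXiv:1907.04668 — 5 statements merged into one kernel-verified Lean document; each statement's English description precedes it below -/
import Mathlib

section
/- Let G be a finite group and let H₁, H₂ be subgroups of G. Then the number of double cosets H₁\G/H₂, multiplied by |H₁|·|H₂|, equals the sum over all conjugacy classes C of G of |H₁ ∩ C| · |H₂ ∩ C| · (|G| / |C|). -/
/-!
Burnside's lemma for the action `(h₁, h₂) • g = h₁ * g * h₂⁻¹` of `H₁ × H₂` on `G`, whose orbits
are the double cosets. The fixed points of `(h₁, h₂)` are the `g` with `g * h₂ * g⁻¹ = h₁`: there
are `|C_G(h₂)| = |G| / |C|` of them when `h₁` lies in the conjugacy class `C` of `h₂`, and none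
otherwise. Summing over `h₁ ∈ H₁` and then grouping the `h₂ ∈ H₂` by conjugacy class gives the
formula.
-/

open Finset MulAction

theorem Set.ncard_inter_eq_card_filter {α : Type*} (s t : Set α) [Fintype s]
    [DecidablePred (· ∈ t)] : (s ∩ t).ncard = #{y : s | ↑y ∈ t} := by
  rw [← Subtype.image_preimage_coe, Set.ncard_image_of_injective _ Subtype.val_injective,
    ← Set.ncard_coe_finset]
  congr
  ext
  simp

theorem Set.sum_comp_eq_sum_ncard_fiber_smul {α β M : Type*} [AddCommMonoid M]
    [Fintype β] [DecidableEq β] (s : Set α) [Fintype s] (π : α → β) (f : β → M) :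
    ∑ a : s, f (π a) = ∑ b, (s ∩ π ⁻¹' {b}).ncard • f b := by
  classical
  refine (Finset.sum_fiberwise Finset.univ (fun a : s ↦ π a) (fun a ↦ f (π a))).symm.trans <|
    Finset.sum_congr rfl fun b _ ↦ ?_
  rw [Finset.sum_congr rfl fun a ha ↦ by rw [(Finset.mem_filter.1 ha).2], Finset.sum_const,
    Set.ncard_inter_eq_card_filter]
  simp only [Set.mem_preimage, Set.mem_singleton_iff]

namespace MulAction

variable {G α : Type*} [Group G] [MulAction G α]

theorem card_smul_eq_of_mem_orbit {x y : α} (hy : y ∈ orbit G x) :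
    Nat.card {g : G // g • x = y} = Nat.card (stabilizer G x) := by
  obtain ⟨c, rfl⟩ := hy
  exact Nat.card_congr <| (Equiv.mulLeft c⁻¹).subtypeEquiv fun g ↦ by
    simp [mul_smul, inv_smul_eq_iff]

theorem card_smul_eq_of_notMem_orbit {x y : α} (hy : y ∉ orbit G x) :
    Nat.card {g : G // g • x = y} = 0 :=
  have : IsEmpty {g : G // g • x = y} := ⟨fun g ↦ hy ⟨g, g.2⟩⟩
  Nat.card_of_isEmpty

theorem sum_card_smul_eq_ncard_inter_orbit_mul (x : α) (s : Set α) [Fintype s] :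
    ∑ y : s, Nat.card {g : G // g • x = y} =
      (s ∩ orbit G x).ncard * Nat.card (stabilizer G x) := by
  classical
  calc ∑ y : s, Nat.card {g : G // g • x = y}
      = ∑ y : s, if (y : α) ∈ orbit G x then Nat.card (stabilizer G x) else 0 := by
        refine Finset.sum_congr rfl fun y _ ↦ ?_
        split_ifs with hy
        · exact card_smul_eq_of_mem_orbit hy
        · exact card_smul_eq_of_notMem_orbit hy
    _ = (s ∩ orbit G x).ncard * Nat.card (stabilizer G x) := by
        rw [Finset.sum_ite, Finset.sum_const_zero, add_zero, Finset.sum_const, smul_eq_mul,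
          Set.ncard_inter_eq_card_filter]

theorem card_stabilizer_eq_card_div_ncard_orbit (x : α) [Finite (orbit G x)] :
    Nat.card (stabilizer G x) = Nat.card G / (orbit G x).ncard := by
  have hpos : 0 < (orbit G x).ncard := (Set.ncard_pos (Set.toFinite _)).2 ⟨x, mem_orbit_self x⟩
  rw [← index_stabilizer, ← Subgroup.card_mul_index (stabilizer G x),
    Nat.mul_div_cancel _ (index_stabilizer G x ▸ hpos)]

end MulAction

namespace DoubleCoset

variable {G : Type*} [Group G] (H₁ H₂ : Subgroup G)

instance prodMulAction : MulAction (H₁ × H₂) G where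
  smul p g := p.1 * g * (p.2 : G)⁻¹
  one_smul g := by
    show ((1 : H₁) : G) * g * ((1 : H₂) : G)⁻¹ = g
    simp
  mul_smul p q g := by
    show ((p.1 * q.1 : H₁) : G) * g * ((p.2 * q.2 : H₂) : G)⁻¹
      = p.1 * (q.1 * g * (q.2 : G)⁻¹) * (p.2 : G)⁻¹
    simp only [Subgroup.coe_mul, mul_inv_rev, mul_assoc]

theorem prod_smul_def (p : H₁ × H₂) (g : G) : p • g = p.1 * g * (p.2 : G)⁻¹ := rfl

theorem orbitRel_prod_eq_setoid : orbitRel (H₁ × H₂) G = setoid H₁ H₂ := by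
  ext a b
  rw [orbitRel_apply, mem_orbit_iff, rel_iff]
  constructor
  · rintro ⟨⟨h₁, h₂⟩, rfl⟩
    exact ⟨h₁⁻¹, inv_mem h₁.2, h₂, h₂.2, by simp [prod_smul_def, mul_assoc]⟩
  · rintro ⟨h₁, hh₁, h₂, hh₂, rfl⟩
    exact ⟨(⟨h₁⁻¹, inv_mem hh₁⟩, ⟨h₂, hh₂⟩), by simp [prod_smul_def, mul_assoc]⟩

theorem card_fixedBy_eq_card_conj (p : H₁ × H₂) :
    Nat.card (fixedBy G p) = Nat.card {c : ConjAct G // c • (p.2 : G) = p.1} :=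
  Nat.card_congr <| ConjAct.toConjAct.toEquiv.subtypeEquiv fun g ↦ by
    rw [mem_fixedBy, prod_smul_def, ConjAct.smul_def, MulEquiv.toEquiv_eq_coe,
      MulEquiv.coe_toEquiv, ConjAct.ofConjAct_toConjAct, mul_inv_eq_iff_eq_mul,
      mul_inv_eq_iff_eq_mul, eq_comm]

theorem card_quotient_mul_card_mul_card_eq_sum [Fintype G] [DecidablePred (· ∈ H₁)]
    [DecidablePred (· ∈ H₂)] :
    Nat.card (Quotient (H₁ : Set G) H₂) * (Nat.card H₁ * Nat.card H₂) =
      ∑ h₂ : H₂, ∑ h₁ : H₁, Nat.card {c : ConjAct G // c • (h₂ : G) = h₁} := by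
  classical
  rw [Quotient, ← orbitRel_prod_eq_setoid, ← Nat.card_prod, Nat.card_eq_fintype_card,
    Nat.card_eq_fintype_card, ← sum_card_fixedBy_eq_card_orbits_mul_card_group,
    Fintype.sum_prod_type_right]
  simp only [← Nat.card_eq_fintype_card, card_fixedBy_eq_card_conj]

end DoubleCoset

theorem ConjClasses.mk_preimage_singleton {G : Type*} [Monoid G] (C : ConjClasses G) :
    ConjClasses.mk ⁻¹' {C} = C.carrier := by
  ext
  exact ConjClasses.mem_carrier_iff_mk_eq.symm

/-- **Double coset counting formula.** For a finite group `G` with subgroups `H₁, H₂`,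
the number of double cosets `H₁\G/H₂`, multiplied by `|H₁|·|H₂|`, equals the sum over
all conjugacy classes `C` of `G` of `|H₁ ∩ C| · |H₂ ∩ C| · (|G| / |C|)`. -/
theorem stmt0 {G : Type*} [Group G] [Finite G] (H₁ H₂ : Subgroup G) :
    Nat.card (DoubleCoset.Quotient (H₁ : Set G) (H₂ : Set G)) * (Nat.card H₁ * Nat.card H₂) =
      ∑ᶠ C : ConjClasses G,
        ((H₁ : Set G) ∩ C.carrier).ncard * ((H₂ : Set G) ∩ C.carrier).ncard *
          (Nat.card G / C.carrier.ncard) := by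
  classical
  cases nonempty_fintype G
  rw [DoubleCoset.card_quotient_mul_card_mul_card_eq_sum, finsum_eq_sum_of_fintype]
  calc ∑ h₂ : H₂, ∑ h₁ : H₁, Nat.card {c : ConjAct G // c • (h₂ : G) = h₁}
      = ∑ h₂ : (H₂ : Set G), ((H₁ : Set G) ∩ (ConjClasses.mk (h₂ : G)).carrier).ncard *
          (Nat.card G / (ConjClasses.mk (h₂ : G)).carrier.ncard) :=
        Finset.sum_congr rfl fun h₂ _ ↦ by
          rw [← ConjAct.orbit_eq_carrier_conjClasses]
          -- `ConjAct G` is `G`, and summing over `H₁` is summing over `(H₁ : Set G)`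
          exact (sum_card_smul_eq_ncard_inter_orbit_mul (h₂ : G) (H₁ : Set G)).trans <|
            congrArg _ (card_stabilizer_eq_card_div_ncard_orbit (h₂ : G))
    _ = ∑ C : ConjClasses G, ((H₂ : Set G) ∩ C.carrier).ncard •
          (((H₁ : Set G) ∩ C.carrier).ncard * (Nat.card G / C.carrier.ncard)) := by
        simp only [Set.sum_comp_eq_sum_ncard_fiber_smul _ ConjClasses.mk
          fun C ↦ ((H₁ : Set G) ∩ C.carrier).ncard * (Nat.card G / C.carrier.ncard),
          ConjClasses.mk_preimage_singleton]
    _ = _ := Finset.sum_congr rfl fun C _ ↦ by rw [smul_eq_mul, mul_left_comm, mul_assoc]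
end

section
/- Z_d(2n) · (2ⁿ·n!)^d equals the cardinality of the set {(γ₁,…,γ_d, σ₁,…,σ_{d−1}) ∈ H^d × G^{d−1} : γᵢ σᵢ γ_d σᵢ⁻¹ = 1 for all i = 1,…,d−1}. -/
/-!
Normalizing the last entry to `1` with the right `G`-action identifies the classes of `G^d` with
the orbits of `H^d` acting on `G^{d-1}` by `τᵢ ↦ γᵢ τᵢ γ_d⁻¹`. Burnside's lemma
`|X / K| · |K| = #{(k, x) | k • x = x}` counts these orbits, and replacing `γ_d` by `γ_d⁻¹` turns
the fixed-point condition into `γᵢ τᵢ γ_d τᵢ⁻¹ = 1`. Finally `|H| = 2ⁿ n!` is the order of the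
centralizer of an element of cycle type `2ⁿ` in `S_{2n}`.
-/

/-- The symmetric group `S_{2n}`. -/
abbrev PermG (n : ℕ) := Equiv.Perm (Fin (2 * n))

/-- The centralizer `H` of the fixed-point-free involution `ξ` in `S_{2n}`;
it is isomorphic to the wreath product `S_n[S₂]` and has order `2ⁿ·n!`. -/
def wreathH (n : ℕ) (ξ : PermG n) : Subgroup (PermG n) :=
  Subgroup.centralizer {ξ}

/-- Two `d`-tuples `(σ₁,…,σ_d), (σ'₁,…,σ'_d) ∈ G^d` are equivalent if there exist
`γ₁,…,γ_d ∈ H` and `γ ∈ G` with `σ'ᵢ = γᵢσᵢγ` for all `i`. -/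
def tensorRel (n d : ℕ) (ξ : PermG n) (σ σ' : Fin d → PermG n) : Prop :=
  ∃ (γv : Fin d → wreathH n ξ) (γ : PermG n),
    ∀ i, σ' i = (γv i : PermG n) * σ i * γ

/-- `Z_d(2n)`: the number of equivalence classes of `d`-tuples, i.e. the number of
rank-`d` `O(N)` tensor invariants built from `2n` tensors. -/
noncomputable def Znum (n d : ℕ) (ξ : PermG n) : ℕ :=
  Nat.card (Quot (tensorRel n d ξ))

open MulAction

namespace Equiv.Perm

variable {α : Type*} [Fintype α] [DecidableEq α]

theorem cycleType_eq_replicate_two_of_fixedPointFree_involution {σ : Perm α} {n : ℕ}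
    (hcard : Fintype.card α = 2 * n) (hσ : σ * σ = 1) (hfpf : ∀ x, σ x ≠ x) :
    σ.cycleType = Multiset.replicate n 2 := by
  have hlen : ∀ k ∈ σ.cycleType, k = 2 := fun k hk =>
    le_antisymm (Nat.le_of_dvd two_pos <| (dvd_of_mem_cycleType hk).trans <|
      orderOf_dvd_of_pow_eq_one (by rw [sq, hσ])) (two_le_of_mem_cycleType hk)
  have hsum : σ.cycleType.sum = 2 * n := by
    rw [sum_cycleType, ← hcard, ← Finset.card_univ]
    exact congrArg _ (Finset.eq_univ_iff_forall.2 fun x => mem_support.2 (hfpf x))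
  rw [Multiset.eq_replicate_card.2 hlen, Multiset.sum_replicate, smul_eq_mul] at hsum
  exact Multiset.eq_replicate.2 ⟨by omega, hlen⟩

theorem nat_card_centralizer_of_fixedPointFree_involution {σ : Perm α} {n : ℕ}
    (hcard : Fintype.card α = 2 * n) (hσ : σ * σ = 1) (hfpf : ∀ x, σ x ≠ x) :
    Nat.card (Subgroup.centralizer {σ}) = 2 ^ n * n.factorial := by
  rw [nat_card_centralizer,
    cycleType_eq_replicate_two_of_fixedPointFree_involution hcard hσ hfpf]
  rcases eq_or_ne n 0 with rfl | hn
  · simp [hcard]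
  · simp [hn, hcard, mul_comm]

end Equiv.Perm

section DoubleCosetRel

/-- Tuples in `G^{m+1}` with last entry `1`, stored as their first `m` entries. -/
def NormalizedTuple (G : Type*) (m : ℕ) : Type _ := Fin m → G

variable {G : Type*} [Group G] (H : Subgroup G)

def DoubleCosetRel (d : ℕ) (σ σ' : Fin d → G) : Prop :=
  ∃ (γv : Fin d → H) (γ : G), ∀ i, σ' i = γv i * σ i * γ

variable {m : ℕ}

instance : SMul (Fin (m + 1) → H) (NormalizedTuple G m) where
  smul γ (τ : Fin m → G) i := γ i.castSucc * τ i * (γ (Fin.last m) : G)⁻¹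

theorem NormalizedTuple.smul_apply (γ : Fin (m + 1) → H) (τ : NormalizedTuple G m) (i : Fin m) :
    (γ • τ) i = γ i.castSucc * τ i * (γ (Fin.last m) : G)⁻¹ := rfl

instance : MulAction (Fin (m + 1) → H) (NormalizedTuple G m) where
  one_smul τ := funext fun i => by
    rw [NormalizedTuple.smul_apply]
    simp
  mul_smul γ γ' τ := funext fun i => by
    simp only [NormalizedTuple.smul_apply, Pi.mul_apply, Subgroup.coe_mul]
    group

def normalizeTuple (σ : Fin (m + 1) → G) : NormalizedTuple G m :=
  fun i => σ i.castSucc * (σ (Fin.last m))⁻¹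

def NormalizedTuple.extend (τ : NormalizedTuple G m) : Fin (m + 1) → G :=
  Fin.snoc (α := fun _ => G) τ 1

@[simp] theorem NormalizedTuple.extend_castSucc (τ : NormalizedTuple G m) (i : Fin m) :
    τ.extend i.castSucc = τ i :=
  Fin.snoc_castSucc ..

@[simp] theorem NormalizedTuple.extend_last (τ : NormalizedTuple G m) :
    τ.extend (Fin.last m) = 1 :=
  Fin.snoc_last ..

theorem doubleCosetRel_extend_normalizeTuple (σ : Fin (m + 1) → G) :
    DoubleCosetRel H (m + 1) σ (normalizeTuple σ).extend :=
  ⟨1, (σ (Fin.last m))⁻¹, Fin.lastCases (by simp) fun i => by simp [normalizeTuple]⟩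

theorem normalizeTuple_extend (τ : NormalizedTuple G m) : normalizeTuple τ.extend = τ :=
  funext fun i => by simp [normalizeTuple]

theorem doubleCosetRel_iff_mem_orbit_normalizeTuple {σ σ' : Fin (m + 1) → G} :
    DoubleCosetRel H (m + 1) σ σ' ↔
      normalizeTuple σ' ∈ orbit (Fin (m + 1) → H) (normalizeTuple σ) := by
  constructor
  · rintro ⟨γv, γ, hσ'⟩
    refine ⟨γv, funext fun i => ?_⟩
    simp only [NormalizedTuple.smul_apply, normalizeTuple, hσ']
    group
  · rintro ⟨γv, hγv⟩
    refine ⟨γv, (σ (Fin.last m))⁻¹ * (γv (Fin.last m) : G)⁻¹ * σ' (Fin.last m),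
      Fin.lastCases (by group) fun i => ?_⟩
    have hi := congrFun hγv i
    simp only [NormalizedTuple.smul_apply, normalizeTuple] at hi
    rw [eq_mul_inv_iff_mul_eq] at hi
    rw [← hi]
    group

noncomputable def quotDoubleCosetRelEquivOrbits :
    Quot (DoubleCosetRel H (m + 1)) ≃
      orbitRel.Quotient (Fin (m + 1) → H) (NormalizedTuple G m) where
  toFun := Quot.lift (fun σ => ⟦normalizeTuple σ⟧) fun _ _ h =>
    (Quotient.sound ((doubleCosetRel_iff_mem_orbit_normalizeTuple H).1 h)).symm
  invFun := Quotient.lift (fun τ => Quot.mk _ τ.extend) fun τ τ' h =>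
    (Quot.sound <| (doubleCosetRel_iff_mem_orbit_normalizeTuple H).2 <| by
      rwa [normalizeTuple_extend, normalizeTuple_extend]).symm
  left_inv := Quot.ind fun σ => (Quot.sound (doubleCosetRel_extend_normalizeTuple H σ)).symm
  right_inv := Quotient.ind fun τ => by simp [normalizeTuple_extend]

end DoubleCosetRel

section TwistedFixedPoints

variable {K : Type*} [InvolutiveInv K] {m : ℕ}

def invertLast (γ : Fin (m + 1) → K) : Fin (m + 1) → K :=
  Function.update γ (Fin.last m) (γ (Fin.last m))⁻¹

theorem invertLast_castSucc (γ : Fin (m + 1) → K) (i : Fin m) :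
    invertLast γ i.castSucc = γ i.castSucc :=
  Function.update_of_ne (Fin.castSucc_lt_last i).ne _ _

theorem invertLast_last (γ : Fin (m + 1) → K) :
    invertLast γ (Fin.last m) = (γ (Fin.last m))⁻¹ :=
  Function.update_self ..

theorem invertLast_involutive : Function.Involutive (invertLast (K := K) (m := m)) := fun γ =>
  funext <| Fin.lastCases (by rw [invertLast_last, invertLast_last, inv_inv])
    fun i => by rw [invertLast_castSucc, invertLast_castSucc]

variable {G : Type*} [Group G] (H : Subgroup G)

theorem invertLast_smul_eq_self_iff (γ : Fin (m + 1) → H) (τ : NormalizedTuple G m) :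
    invertLast γ • τ = τ ↔ ∀ i, (γ i.castSucc : G) * τ i * γ (Fin.last m) * (τ i)⁻¹ = 1 := by
  refine funext_iff.trans (forall_congr' fun i => ?_)
  rw [NormalizedTuple.smul_apply, invertLast_castSucc, invertLast_last, InvMemClass.coe_inv,
    inv_inv, mul_inv_eq_one]

theorem card_orbits_mul_card_eq_card_twistedFixedPoints :
    Nat.card (orbitRel.Quotient (Fin (m + 1) → H) (NormalizedTuple G m)) *
        Nat.card (Fin (m + 1) → H) =
      Nat.card {x : (Fin (m + 1) → H) × (Fin m → G) //
        ∀ i, (x.1 i.castSucc : G) * x.2 i * x.1 (Fin.last m) * (x.2 i)⁻¹ = 1} := by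
  calc _ = Nat.card (Σ γ : Fin (m + 1) → H, fixedBy (NormalizedTuple G m) γ) := by
          rw [← Nat.card_prod, Nat.card_congr (sigmaFixedByEquivOrbitsProdGroup _ _)]
    _ = Nat.card {y : (Fin (m + 1) → H) × NormalizedTuple G m // y.1 • y.2 = y.2} :=
          Nat.card_congr (Equiv.subtypeProdEquivSigmaSubtype fun γ τ => γ • τ = τ).symm
    _ = _ := (Nat.card_congr <| Equiv.subtypeEquiv
          (invertLast_involutive.toPerm.prodCongr (Equiv.refl _))
          fun x => (invertLast_smul_eq_self_iff H x.1 x.2).symm).symm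

end TwistedFixedPoints

theorem stmt2_general (n d : ℕ) (hd : 1 ≤ d) (ξ : PermG n)
    (hinv : ξ * ξ = 1) (hfpf : ∀ x, ξ x ≠ x) :
    Znum n d ξ * (2 ^ n * n.factorial) ^ d =
      Nat.card {x : (Fin d → wreathH n ξ) × (Fin (d - 1) → PermG n) //
        ∀ i : Fin (d - 1),
          (x.1 (i.castLE (Nat.sub_le d 1)) : PermG n) * x.2 i *
            (x.1 ⟨d - 1, Nat.sub_lt hd Nat.one_pos⟩ : PermG n) * (x.2 i)⁻¹ = 1} := by
  obtain ⟨m, rfl⟩ : ∃ m, d = m + 1 := ⟨d - 1, by omega⟩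
  have hH : Nat.card (wreathH n ξ) = 2 ^ n * n.factorial :=
    Equiv.Perm.nat_card_centralizer_of_fixedPointFree_involution (Fintype.card_fin _) hinv hfpf
  have hHd : Nat.card (Fin (m + 1) → wreathH n ξ) = (2 ^ n * n.factorial) ^ (m + 1) := by
    rw [Nat.card_pi, hH, Finset.prod_const, Finset.card_univ, Fintype.card_fin]
  rw [Znum, show tensorRel n (m + 1) ξ = DoubleCosetRel (wreathH n ξ) (m + 1) from rfl,
    Nat.card_congr (quotDoubleCosetRelEquivOrbits _), ← hHd]
  exact card_orbits_mul_card_eq_card_twistedFixedPoints _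

/-- `Z_d(2n) · (2ⁿ·n!)^d` equals the cardinality of the set
`{(γ₁,…,γ_d, σ₁,…,σ_{d−1}) ∈ H^d × G^{d−1} : γᵢ σᵢ γ_d σᵢ⁻¹ = 1 for all i = 1,…,d−1}`. -/
theorem stmt2 (n d : ℕ) (hn : 1 ≤ n) (hd : 1 ≤ d) (ξ : PermG n)
    (hinv : ξ * ξ = 1) (hfpf : ∀ x, ξ x ≠ x) :
    Znum n d ξ * (2 ^ n * n.factorial) ^ d =
      Nat.card {x : (Fin d → wreathH n ξ) × (Fin (d - 1) → PermG n) //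
        ∀ i : Fin (d - 1),
          (x.1 (i.castLE (Nat.sub_le d 1)) : PermG n) * x.2 i *
            (x.1 ⟨d - 1, Nat.sub_lt hd Nat.one_pos⟩ : PermG n) * (x.2 i)⁻¹ = 1} :=
  stmt2_general n d hd ξ hinv hfpf
end

section
/- Z_d(2n) · (2ⁿ·n!)^d equals the sum over all conjugacy classes c of G = S_{2n} of |H ∩ c|^d · (|G| / |c|)^{d−1}. -/
/-!
Let `H^d × G` act on `G^d` by `σᵢ ↦ γᵢ σᵢ γ⁻¹`; its orbits are the equivalence classes counted
by `Z_d(2n)`. By Burnside, `Z_d(2n) · |H|^d · |G|` is the number of pairs `(k, σ)` with `k • σ = σ`.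
For fixed `γ`, the condition splits over the coordinates into `σᵢ γ σᵢ⁻¹ = γᵢ ∈ H`, and the
number of `τ` with `τ γ τ⁻¹ ∈ H` is `|H ∩ c| · |C(γ)|`, where `c` is the class of `γ` and
`|C(γ)| = |G| / |c|`. Summing over each class gives the right-hand side times `|G|`. Finally
`ξ` has cycle type `2ⁿ`, so its centralizer `H` has order `2ⁿ · n!`.
-/

open Equiv Subgroup MulAction

section Centralizer

variable {G : Type*} [Group G]

lemma card_centralizer_mul_ncard_carrier (γ : G) :
    Nat.card (centralizer {γ}) * (ConjClasses.mk γ).carrier.ncard = Nat.card G := by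
  rw [nat_card_centralizer_nat_card_stabilizer, ← ConjAct.orbit_eq_carrier_conjClasses,
    ← index_stabilizer, card_mul_index]
  rfl

lemma ncard_carrier_dvd_card (c : ConjClasses G) : c.carrier.ncard ∣ Nat.card G := by
  obtain ⟨γ, rfl⟩ := ConjClasses.mk_surjective c
  exact Dvd.intro_left _ (card_centralizer_mul_ncard_carrier γ)

lemma conj_eq_conj_iff_inv_mul_mem_centralizer (γ τ τ₀ : G) :
    τ * γ * τ⁻¹ = τ₀ * γ * τ₀⁻¹ ↔ τ₀⁻¹ * τ ∈ centralizer {γ} := by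
  rw [mem_centralizer_singleton_iff, mul_inv_eq_iff_eq_mul, mul_assoc, mul_assoc,
    ← inv_mul_eq_iff_eq_mul, ← mul_assoc, ← mul_assoc]

lemma card_conj_eq_of_isConj {γ h : G} (hc : IsConj γ h) :
    Nat.card {τ : G // τ * γ * τ⁻¹ = h} = Nat.card (centralizer {γ}) := by
  obtain ⟨τ₀, rfl⟩ := isConj_iff.mp hc
  exact Nat.card_congr <| (Equiv.mulLeft τ₀⁻¹).subtypeEquiv fun τ =>
    conj_eq_conj_iff_inv_mul_mem_centralizer γ τ τ₀

lemma sum_card_conj_eq (H : Subgroup G) [Fintype H] (γ : G) :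
    ∑ h : H, Nat.card {τ : G // τ * γ * τ⁻¹ = h} =
      ((H : Set G) ∩ (ConjClasses.mk γ).carrier).ncard * Nat.card (centralizer {γ}) := by
  classical
  have hterm (h : H) : Nat.card {τ : G // τ * γ * τ⁻¹ = h} =
      if IsConj γ h then Nat.card (centralizer {γ}) else 0 := by
    split_ifs with hc
    · exact card_conj_eq_of_isConj hc
    · exact Nat.card_eq_zero.mpr (.inl ⟨fun ⟨τ, hτ⟩ => hc (isConj_iff.mpr ⟨τ, hτ⟩)⟩)
  have hmem (x : G) : x ∈ H ∧ IsConj γ x ↔ x ∈ (H : Set G) ∩ (ConjClasses.mk γ).carrier := by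
    rw [Set.mem_inter_iff, ConjClasses.mem_carrier_iff_mk_eq, ConjClasses.mk_eq_mk_iff_isConj,
      isConj_comm, SetLike.mem_coe]
  rw [Fintype.sum_congr _ _ hterm, Finset.sum_ite, Finset.sum_const_zero, add_zero,
    Finset.sum_const, smul_eq_mul, ← Fintype.card_subtype, ← Nat.card_eq_fintype_card,
    ← Nat.card_coe_set_eq]
  exact congrArg (· * _) <| Nat.card_congr <|
    (Equiv.subtypeSubtypeEquivSubtypeInter (· ∈ H) (IsConj γ)).trans (Equiv.subtypeEquivRight hmem)

end Centralizer

section ClassSum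

variable {G : Type*} [Group G] [Fintype G]

lemma sum_comp_mk_eq_sum_conjClasses {M : Type*} [AddCommMonoid M] [Fintype (ConjClasses G)]
    (F : ConjClasses G → M) :
    ∑ γ : G, F (ConjClasses.mk γ) = ∑ c, c.carrier.ncard • F c := by
  classical
  rw [← Finset.sum_fiberwise Finset.univ ConjClasses.mk]
  refine Finset.sum_congr rfl fun c _ => ?_
  rw [Finset.sum_congr rfl fun γ hγ => by rw [(Finset.mem_filter.mp hγ).2], Finset.sum_const,
    ← Set.ncard_coe_finset]
  congr
  ext
  simp [ConjClasses.mem_carrier_iff_mk_eq]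

lemma sum_pow_sum_card_conj_eq (H : Subgroup G) [Fintype H] {d : ℕ} (hd : 1 ≤ d) :
    ∑ γ : G, (∑ h : H, Nat.card {τ : G // τ * γ * τ⁻¹ = h}) ^ d =
      (∑ᶠ c : ConjClasses G, ((H : Set G) ∩ c.carrier).ncard ^ d *
        (Nat.card G / c.carrier.ncard) ^ (d - 1)) * Nat.card G := by
  classical
  have hcent (γ : G) :
      Nat.card (centralizer {γ}) = Nat.card G / (ConjClasses.mk γ).carrier.ncard :=
    Nat.eq_div_of_mul_eq_left
      ((Set.ncard_pos (Set.toFinite _)).mpr ⟨γ, ConjClasses.mem_carrier_mk⟩).ne'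
      (card_centralizer_mul_ncard_carrier γ)
  simp_rw [sum_card_conj_eq, hcent]
  rw [sum_comp_mk_eq_sum_conjClasses
      (fun c => (((H : Set G) ∩ c.carrier).ncard * (Nat.card G / c.carrier.ncard)) ^ d),
    finsum_eq_sum_of_fintype, Finset.sum_mul]
  refine Finset.sum_congr rfl fun c _ => ?_
  obtain ⟨e, rfl⟩ := Nat.exists_eq_add_of_le' hd
  rw [smul_eq_mul, Nat.add_sub_cancel]
  calc _ = ((H : Set G) ∩ c.carrier).ncard ^ (e + 1) * (Nat.card G / c.carrier.ncard) ^ e *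
        (c.carrier.ncard * (Nat.card G / c.carrier.ncard)) := by ring
    _ = _ := by rw [Nat.mul_div_cancel' (ncard_carrier_dvd_card c)]

end ClassSum

section TwoSided

variable {G : Type*} [Group G] {H : Subgroup G} {d : ℕ}

instance twoSidedAction : MulAction ((Fin d → H) × G) (Fin d → G) where
  smul k σ i := k.1 i * σ i * k.2⁻¹
  one_smul σ := funext fun i => show (1 : G) * σ i * 1⁻¹ = σ i by group
  mul_smul a b σ := funext fun i =>
    show (a.1 i * b.1 i : G) * σ i * (a.2 * b.2)⁻¹ = a.1 i * (b.1 i * σ i * b.2⁻¹) * a.2⁻¹ by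
      group

lemma twoSided_smul_apply (k : (Fin d → H) × G) (σ : Fin d → G) (i : Fin d) :
    (k • σ) i = k.1 i * σ i * k.2⁻¹ := rfl

lemma card_fixedBy_twoSided (γv : Fin d → H) (γ : G) :
    Nat.card (fixedBy (Fin d → G) (γv, γ)) = ∏ i, Nat.card {τ : G // τ * γ * τ⁻¹ = γv i} := by
  rw [← Nat.card_pi]
  refine Nat.card_congr <| (Equiv.subtypeEquivRight fun σ => ?_).trans Equiv.subtypePiEquivPi
  rw [mem_fixedBy, funext_iff]
  refine forall_congr' fun i => ?_
  rw [twoSided_smul_apply, mul_inv_eq_iff_eq_mul, mul_inv_eq_iff_eq_mul, eq_comm]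

lemma card_orbits_twoSided_mul [Fintype G] [Fintype H] :
    Nat.card (Quotient (orbitRel ((Fin d → H) × G) (Fin d → G))) *
        (Nat.card H ^ d * Nat.card G) =
      ∑ γ : G, (∑ h : H, Nat.card {τ : G // τ * γ * τ⁻¹ = h}) ^ d := by
  classical
  have burnside := sum_card_fixedBy_eq_card_orbits_mul_card_group ((Fin d → H) × G) (Fin d → G)
  simp only [← Nat.card_eq_fintype_card, Nat.card_prod, Nat.card_fun, Nat.card_fin] at burnside
  rw [← burnside, Fintype.sum_prod_type_right]
  simp_rw [card_fixedBy_twoSided, Fintype.sum_pow]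

end TwoSided

lemma card_centralizer_of_fixedPointFree_involution {α : Type*} [Fintype α] [DecidableEq α]
    {ξ : Perm α} {m : ℕ} (hinv : ξ * ξ = 1) (hfpf : ∀ x, ξ x ≠ x)
    (hα : Fintype.card α = 2 * m) : Nat.card (centralizer {ξ}) = 2 ^ m * m.factorial := by
  have hall : ∀ k ∈ ξ.cycleType, k = 2 := fun k hk =>
    le_antisymm
      (Nat.le_of_dvd two_pos ((Perm.dvd_of_mem_cycleType hk).trans
        (orderOf_dvd_of_pow_eq_one (by rw [sq, hinv]))))
      (Perm.two_le_of_mem_cycleType hk)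
  have hsum := ξ.sum_cycleType
  rw [Multiset.eq_replicate_card.mpr hall, Multiset.sum_replicate, smul_eq_mul,
    Finset.eq_univ_of_forall fun x => Perm.mem_support.mpr (hfpf x), Finset.card_univ, hα]
    at hsum
  have hcycleType : ξ.cycleType = Multiset.replicate m 2 := by
    rw [Multiset.eq_replicate_card.mpr hall]
    congr
    omega
  rw [Perm.nat_card_centralizer, hcycleType]
  rcases Nat.eq_zero_or_pos m with rfl | hm
  · simp [hα]
  · simp [hm.ne', hα, mul_comm]

lemma tensorRel_iff_orbitRel {n d : ℕ} {ξ : PermG n} (σ σ' : Fin d → PermG n) :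
    tensorRel n d ξ σ σ' ↔ orbitRel ((Fin d → wreathH n ξ) × PermG n) (Fin d → PermG n) σ σ' := by
  rw [Setoid.comm', orbitRel_apply, mem_orbit_iff]
  constructor
  · rintro ⟨γv, γ, h⟩
    exact ⟨(γv, γ⁻¹), funext fun i => by rw [twoSided_smul_apply, inv_inv, h i]⟩
  · rintro ⟨⟨γv, γ⟩, rfl⟩
    exact ⟨γv, γ⁻¹, fun i => rfl⟩

lemma Znum_eq_card_orbits (n d : ℕ) (ξ : PermG n) :
    Znum n d ξ =
      Nat.card (Quotient (orbitRel ((Fin d → wreathH n ξ) × PermG n) (Fin d → PermG n))) :=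
  Nat.card_congr (Quot.congrRight tensorRel_iff_orbitRel)

theorem stmt3_general (n d : ℕ) (hd : 1 ≤ d) (ξ : PermG n)
    (hinv : ξ * ξ = 1) (hfpf : ∀ x, ξ x ≠ x) :
    Znum n d ξ * (2 ^ n * n.factorial) ^ d =
      ∑ᶠ c : ConjClasses (PermG n),
        ((wreathH n ξ : Set (PermG n)) ∩ c.carrier).ncard ^ d *
          (Nat.card (PermG n) / c.carrier.ncard) ^ (d - 1) := by
  have : Fintype (wreathH n ξ) := Fintype.ofFinite _
  have hH : Nat.card (wreathH n ξ) = 2 ^ n * n.factorial :=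
    card_centralizer_of_fixedPointFree_involution hinv hfpf (Fintype.card_fin _)
  apply Nat.eq_of_mul_eq_mul_right (Nat.card_pos (α := PermG n))
  rw [mul_assoc, Znum_eq_card_orbits, ← hH, card_orbits_twoSided_mul,
    sum_pow_sum_card_conj_eq _ hd]

/-- `Z_d(2n) · (2ⁿ·n!)^d` equals the sum over all conjugacy classes `c` of `G = S_{2n}`
of `|H ∩ c|^d · (|G| / |c|)^{d−1}`. -/
theorem stmt3 (n d : ℕ) (hn : 1 ≤ n) (hd : 1 ≤ d) (ξ : PermG n)
    (hinv : ξ * ξ = 1) (hfpf : ∀ x, ξ x ≠ x) :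
    Znum n d ξ * (2 ^ n * n.factorial) ^ d =
      ∑ᶠ c : ConjClasses (PermG n),
        ((wreathH n ξ : Set (PermG n)) ∩ c.carrier).ncard ^ d *
          (Nat.card (PermG n) / c.carrier.ncard) ^ (d - 1) :=
  stmt3_general n d hd ξ hinv hfpf
end

section
/- For all σ = (σ₁,…,σ_d) and σ' = (σ'₁,…,σ'_d) in G^d, the product in ℂ[G]^{⊗d} satisfies E(σ) · E(σ') = Σ_{β₁,…,β_d ∈ H} Σ_{g ∈ G} E((σ₁ g β₁ σ'₁, …, σ_d g β_d σ'_d)). In particular the linear span K_d(2n) of the elements E(σ) is closed under multiplication, i.e., it is a subalgebra (possibly without the ambient unit) of ℂ[G]^{⊗d}. -/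
/-- The element `E(σ) = Σ_{γ₁,…,γ_d ∈ H} Σ_{γ ∈ G} (γ₁σ₁γ) ⊗ ⋯ ⊗ (γ_dσ_dγ)` of the
`d`-fold tensor power `ℂ[G]^{⊗d}` of the complex group algebra of `G = S_{2n}`. -/
noncomputable def Evec (n d : ℕ) (ξ : PermG n) (σ : Fin d → PermG n) :
    PiTensorProduct ℂ (fun _ : Fin d => MonoidAlgebra ℂ (PermG n)) :=
  ∑ᶠ γv : Fin d → wreathH n ξ, ∑ᶠ γ : PermG n,
    PiTensorProduct.tprod ℂ
      (fun i => MonoidAlgebra.of ℂ (PermG n) ((γv i : PermG n) * σ i * γ))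

/-- `K_d(2n)`: the ℂ-linear span of the elements `E(σ)` inside `ℂ[G]^{⊗d}`. -/
noncomputable def Kspace (n d : ℕ) (ξ : PermG n) :
    Submodule ℂ (PiTensorProduct ℂ (fun _ : Fin d => MonoidAlgebra ℂ (PermG n))) :=
  Submodule.span ℂ (Set.range (Evec n d ξ))


open Finset PiTensorProduct

theorem Submodule.mul_mem_span_of_mul_mem {R A : Type*} [CommSemiring R] [Semiring A]
    [Algebra R A] {s : Set A} (hs : ∀ a ∈ s, ∀ b ∈ s, a * b ∈ span R s) {x y : A}
    (hx : x ∈ span R s) (hy : y ∈ span R s) : x * y ∈ span R s := by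
  have hxy : x * y ∈ span R s * span R s := mul_mem_mul hx hy
  rw [span_mul_span] at hxy
  exact span_le.mpr (Set.mul_subset_iff.mpr hs) hxy

theorem AddSubmonoidClass.finsum_mem {S M ι : Type*} [AddCommMonoid M] [SetLike S M]
    [AddSubmonoidClass S M] {p : S} {f : ι → M} (hf : ∀ i, f i ∈ p) : ∑ᶠ i, f i ∈ p :=
  finsum_induction (· ∈ p) (zero_mem p) (fun _ _ => add_mem) hf

theorem PiTensorProduct.tprod_of_mul_tprod_of {R ι G : Type*} [CommSemiring R] [Monoid G]
    (a b : ι → G) :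
    tprod R (fun i => MonoidAlgebra.of R G (a i)) *
        tprod R (fun i => MonoidAlgebra.of R G (b i)) =
      tprod R (fun i => MonoidAlgebra.of R G (a i * b i)) := by
  simp only [tprod_mul_tprod, Pi.mul_def, map_mul]

/-- Expanding both sides, the summation index `γ` of `E(σ)` becomes `g` and the index `γ₁,…,γ_d`
of `E(σ')` becomes `β`. -/
theorem Evec_mul_Evec (n d : ℕ) (ξ : PermG n) (σ σ' : Fin d → PermG n) :
    Evec n d ξ σ * Evec n d ξ σ' =
      ∑ᶠ β : Fin d → wreathH n ξ, ∑ᶠ g : PermG n,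
        Evec n d ξ (fun i => σ i * g * (β i : PermG n) * σ' i) := by
  have : Fintype (Fin d → wreathH n ξ) := Fintype.ofFinite _
  simp only [Evec, finsum_eq_sum_of_fintype, sum_mul_sum, tprod_of_mul_tprod_of, mul_assoc]
  rw [sum_comm]
  exact sum_congr rfl fun _ _ => sum_comm

theorem Evec_mul_Evec_mem_Kspace (n d : ℕ) (ξ : PermG n) (σ σ' : Fin d → PermG n) :
    Evec n d ξ σ * Evec n d ξ σ' ∈ Kspace n d ξ := by
  rw [Evec_mul_Evec]
  exact AddSubmonoidClass.finsum_mem fun _ =>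
    AddSubmonoidClass.finsum_mem fun _ => Submodule.subset_span ⟨_, rfl⟩

theorem stmt9_general (n d : ℕ) (ξ : PermG n) :
    (∀ σ σ' : Fin d → PermG n,
      Evec n d ξ σ * Evec n d ξ σ' =
        ∑ᶠ β : Fin d → wreathH n ξ, ∑ᶠ g : PermG n,
          Evec n d ξ (fun i => σ i * g * (β i : PermG n) * σ' i)) ∧
    (∀ x y, x ∈ Kspace n d ξ → y ∈ Kspace n d ξ → x * y ∈ Kspace n d ξ) := by
  refine ⟨Evec_mul_Evec n d ξ, fun x y hx hy => ?_⟩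
  refine Submodule.mul_mem_span_of_mul_mem ?_ hx hy
  rintro _ ⟨σ, rfl⟩ _ ⟨σ', rfl⟩
  exact Evec_mul_Evec_mem_Kspace n d ξ σ σ'

/-- Product formula: `E(σ) · E(σ') = Σ_{β₁,…,β_d ∈ H} Σ_{g ∈ G} E((σ₁gβ₁σ'₁,…,σ_dgβ_dσ'_d))`;
in particular the span `K_d(2n)` is closed under multiplication. -/
theorem stmt9 (n d : ℕ) (hn : 1 ≤ n) (hd : 1 ≤ d) (ξ : PermG n)
    (hinv : ξ * ξ = 1) (hfpf : ∀ x, ξ x ≠ x) :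
    (∀ σ σ' : Fin d → PermG n,
      Evec n d ξ σ * Evec n d ξ σ' =
        ∑ᶠ β : Fin d → wreathH n ξ, ∑ᶠ g : PermG n,
          Evec n d ξ (fun i => σ i * g * (β i : PermG n) * σ' i)) ∧
    (∀ x y, x ∈ Kspace n d ξ → y ∈ Kspace n d ξ → x * y ∈ Kspace n d ξ) :=
  stmt9_general n d ξ
end

section
/- The pairing 𝛿 restricted to K_d(2n) is nondegenerate: if x ∈ K_d(2n) satisfies 𝛿(x, y) = 0 for all y ∈ K_d(2n), then x = 0. (This is the key step showing that the double coset algebra K_d(2n) is semi-simple.) -/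
/-! `E(σ)` is the orbit sum of `σ` under the group `H^d × G` acting on `G^d` by
`(γ₁,…,γ_d, γ) • σ = (γ₁σ₁γ⁻¹, …, γ_dσ_dγ⁻¹)`. Since `𝛿` is the identity form on group-like
tensors, `𝛿(E(σ), E(τ))` counts the pairs `(g, h)` with `g • σ = h • τ`: it vanishes unless
`σ` and `τ` lie in one orbit, in which case `E(σ) = E(τ)` and it is a positive integer.
So the distinct vectors `E(σ)` are pairwise orthogonal and non-isotropic, and a form is
nondegenerate on the span of such a family. -/

open Finset

theorem eq_zero_of_mem_span_of_pairwise_orthogonal {R M : Type*} [CommRing R]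
    [NoZeroDivisors R] [AddCommGroup M] [Module R M] {B : M →ₗ[R] M →ₗ[R] R} {s : Set M}
    (hs : s.Pairwise fun u v => B u v = 0) (hself : ∀ v ∈ s, B v v ≠ 0)
    {x : M} (hx : x ∈ Submodule.span R s) (hxs : ∀ v ∈ s, B x v = 0) : x = 0 := by
  obtain ⟨f, t, hts, -, rfl⟩ := Submodule.mem_span_iff_exists_finset_subset.mp hx
  have hf : ∀ v ∈ t, f v = 0 := fun v hv => by
    have hBv : B (∑ a ∈ t, f a • a) v = f v * B v v := by
      rw [map_sum, LinearMap.sum_apply, sum_eq_single v, map_smul, LinearMap.smul_apply,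
        smul_eq_mul]
      · intro a ha hav
        rw [map_smul, LinearMap.smul_apply, hs (hts ha) (hts hv) hav, smul_zero]
      · exact fun hv' => absurd hv hv'
    exact (mul_eq_zero.mp (hBv ▸ hxs v (hts hv))).resolve_right (hself v (hts hv))
  exact sum_eq_zero fun v hv => by rw [hf v hv, zero_smul]

section OrbitSum

variable (Γ : Type*) {X R M : Type*} [Group Γ] [Fintype Γ] [MulAction Γ X]
  [CommRing R] [AddCommGroup M] [Module R M]

def orbitSum (e : X → M) (x : X) : M :=
  ∑ g : Γ, e (g • x)

variable {Γ}

theorem orbitSum_smul (e : X → M) (g : Γ) (x : X) : orbitSum Γ e (g • x) = orbitSum Γ e x :=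
  Fintype.sum_equiv (Equiv.mulRight g) _ _ fun h => by simp [mul_smul]

theorem orbitSum_eq_of_smul_eq_smul (e : X → M) {x y : X} {g h : Γ} (hxy : g • x = h • y) :
    orbitSum Γ e x = orbitSum Γ e y := by
  rw [← orbitSum_smul e g x, hxy, orbitSum_smul]

variable [DecidableEq X] {B : M →ₗ[R] M →ₗ[R] R} {e : X → M}
  (he : ∀ x y, B (e x) (e y) = if x = y then 1 else 0)
include he

theorem apply_orbitSum_orbitSum (x y : X) :
    B (orbitSum Γ e x) (orbitSum Γ e y) = #{p : Γ × Γ | p.1 • x = p.2 • y} := by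
  simp only [orbitSum, map_sum, LinearMap.sum_apply, he]
  rw [← sum_boole, ← univ_product_univ, sum_product_right]

theorem apply_orbitSum_eq_zero_of_ne {x y : X} (hxy : orbitSum Γ e x ≠ orbitSum Γ e y) :
    B (orbitSum Γ e x) (orbitSum Γ e y) = 0 := by
  rw [apply_orbitSum_orbitSum he, card_eq_zero.mpr, Nat.cast_zero]
  refine filter_eq_empty_iff.mpr ?_
  rintro ⟨g, h⟩ - hgh
  exact hxy (orbitSum_eq_of_smul_eq_smul e hgh)

theorem apply_orbitSum_self_ne_zero [CharZero R] (x : X) :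
    B (orbitSum Γ e x) (orbitSum Γ e x) ≠ 0 := by
  rw [apply_orbitSum_orbitSum he, Nat.cast_ne_zero, ← Nat.pos_iff_ne_zero, card_pos]
  exact ⟨(1, 1), by simp⟩

theorem eq_zero_of_mem_span_orbitSum [CharZero R] [NoZeroDivisors R] {v : M}
    (hv : v ∈ Submodule.span R (Set.range (orbitSum Γ e)))
    (hv0 : ∀ x, B v (orbitSum Γ e x) = 0) : v = 0 := by
  refine eq_zero_of_mem_span_of_pairwise_orthogonal ?_ ?_ hv (Set.forall_mem_range.mpr hv0)
  · rintro _ ⟨x, rfl⟩ _ ⟨y, rfl⟩ hxy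
    exact apply_orbitSum_eq_zero_of_ne he hxy
  · rintro _ ⟨x, rfl⟩
    exact apply_orbitSum_self_ne_zero he x

end OrbitSum

instance (n d : ℕ) (ξ : PermG n) :
    SMul ((Fin d → wreathH n ξ) × PermG n) (Fin d → PermG n) where
  smul a σ i := a.1 i * σ i * a.2⁻¹

theorem tuple_smul_apply {n d : ℕ} {ξ : PermG n} (a : (Fin d → wreathH n ξ) × PermG n)
    (σ : Fin d → PermG n) (i : Fin d) : (a • σ) i = a.1 i * σ i * a.2⁻¹ :=
  rfl

instance (n d : ℕ) (ξ : PermG n) :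
    MulAction ((Fin d → wreathH n ξ) × PermG n) (Fin d → PermG n) where
  one_smul σ := funext fun i => by simp [tuple_smul_apply]
  mul_smul a b σ := funext fun i => by simp [tuple_smul_apply, mul_assoc]

theorem Evec_eq_orbitSum (n d : ℕ) (ξ : PermG n) [Fintype (wreathH n ξ)]
    (σ : Fin d → PermG n) :
    Evec n d ξ σ = orbitSum ((Fin d → wreathH n ξ) × PermG n)
      (fun τ => PiTensorProduct.tprod ℂ fun i => MonoidAlgebra.of ℂ (PermG n) (τ i)) σ := by
  simp only [Evec, orbitSum, finsum_eq_sum_of_fintype, Fintype.sum_prod_type]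
  exact sum_congr rfl fun γv _ => Fintype.sum_equiv (Equiv.inv _) _ _ fun γ => by
    simp [tuple_smul_apply]

theorem stmt11_general (n d : ℕ) (ξ : PermG n)
    (δp : PiTensorProduct ℂ (fun _ : Fin d => MonoidAlgebra ℂ (PermG n)) →ₗ[ℂ]
          PiTensorProduct ℂ (fun _ : Fin d => MonoidAlgebra ℂ (PermG n)) →ₗ[ℂ] ℂ)
    (hδ : ∀ σ τ : Fin d → PermG n,
      δp (PiTensorProduct.tprod ℂ (fun i => MonoidAlgebra.of ℂ (PermG n) (σ i)))
         (PiTensorProduct.tprod ℂ (fun i => MonoidAlgebra.of ℂ (PermG n) (τ i))) =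
        if σ = τ then 1 else 0) :
    ∀ x ∈ Kspace n d ξ, (∀ y ∈ Kspace n d ξ, δp x y = 0) → x = 0 := by
  let _ : Fintype (wreathH n ξ) := Fintype.ofFinite _
  have hE : Evec n d ξ = orbitSum _ _ := funext (Evec_eq_orbitSum n d ξ)
  intro x hx hx0
  rw [Kspace, hE] at hx
  exact eq_zero_of_mem_span_orbitSum hδ hx fun σ =>
    hx0 _ (Submodule.subset_span ⟨σ, Evec_eq_orbitSum n d ξ σ⟩)

/-- The pairing `𝛿` (the bilinear form determined on group-like elements by
`𝛿(σ₁⊗⋯⊗σ_d, τ₁⊗⋯⊗τ_d) = δ_{στ}`) restricted to `K_d(2n)` is nondegenerate: if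
`x ∈ K_d(2n)` satisfies `𝛿(x, y) = 0` for all `y ∈ K_d(2n)`, then `x = 0`. -/
theorem stmt11 (n d : ℕ) (hn : 1 ≤ n) (hd : 1 ≤ d) (ξ : PermG n)
    (hinv : ξ * ξ = 1) (hfpf : ∀ x, ξ x ≠ x)
    (δp : PiTensorProduct ℂ (fun _ : Fin d => MonoidAlgebra ℂ (PermG n)) →ₗ[ℂ]
          PiTensorProduct ℂ (fun _ : Fin d => MonoidAlgebra ℂ (PermG n)) →ₗ[ℂ] ℂ)
    (hδ : ∀ σ τ : Fin d → PermG n,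
      δp (PiTensorProduct.tprod ℂ (fun i => MonoidAlgebra.of ℂ (PermG n) (σ i)))
         (PiTensorProduct.tprod ℂ (fun i => MonoidAlgebra.of ℂ (PermG n) (τ i))) =
        if σ = τ then 1 else 0) :
    ∀ x ∈ Kspace n d ξ, (∀ y ∈ Kspace n d ξ, δp x y = 0) → x = 0 :=
  stmt11_general n d ξ δp hδ
end
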